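/- arXiv:2407.06680 — 2 statements merged into one kernel-verified Lean document; each statement's English description precedes it below -/
import Mathlib

section
/- The group with presentation ⟨c, d, z ∣ c⁻¹dc² = z, cdc⁻² = z⟩ is isomorphic to the Baumslag–Solitar group BS(2,4) = ⟨c, d ∣ d⁻¹c²d = c⁴⟩. -/
open FreeGroup

/-- The Baumslag–Solitar group `BS(n,m) = ⟨c, d ∣ d⁻¹cⁿd = cᵐ⟩` (generator 0 is `c`,
generator 1 is `d`). -/
abbrev BS (n m : ℕ) : Type :=
  PresentedGroup ({(of 1)⁻¹ * (of 0) ^ n * of 1 * ((of 0) ^ m)⁻¹} : Set (FreeGroup (Fin 2)))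

/-- The group `⟨c, d, z ∣ c⁻¹dc² = z, cdc⁻² = z⟩` (generators: 0 = c, 1 = d, 2 = z). -/
abbrev K : Type :=
  PresentedGroup ({(of 0)⁻¹ * of 1 * (of 0) ^ 2 * (of 2)⁻¹,
                   of 0 * of 1 * ((of 0) ^ 2)⁻¹ * (of 2)⁻¹} : Set (FreeGroup (Fin 3)))

lemma mk_rel_one {α : Type*} {rels : Set (FreeGroup α)} {r : FreeGroup α} (hr : r ∈ rels) :
    PresentedGroup.mk rels r = 1 :=
  (QuotientGroup.eq_one_iff _).mpr (Subgroup.subset_normalClosure hr)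

-- BS relation: d⁻¹ c² d = c⁴ in BS 2 4
lemma bs_rel : (PresentedGroup.of 1 : BS 2 4)⁻¹ * (PresentedGroup.of 0) ^ 2 *
    PresentedGroup.of 1 = (PresentedGroup.of 0) ^ 4 := by
  have h := mk_rel_one (rels := ({(of 1)⁻¹ * (of 0) ^ 2 * of 1 * ((of 0) ^ 4)⁻¹} :
      Set (FreeGroup (Fin 2)))) rfl
  simp only [_root_.map_mul, _root_.map_inv, _root_.map_pow] at h
  exact mul_inv_eq_one.mp h

-- K relations
lemma k_rel1 : (PresentedGroup.of 0 : K)⁻¹ * PresentedGroup.of 1 * (PresentedGroup.of 0) ^ 2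
    = PresentedGroup.of 2 := by
  have h := mk_rel_one (rels := ({(of 0)⁻¹ * of 1 * (of 0) ^ 2 * (of 2)⁻¹,
      of 0 * of 1 * ((of 0) ^ 2)⁻¹ * (of 2)⁻¹} : Set (FreeGroup (Fin 3)))) (Set.mem_insert _ _)
  simp only [_root_.map_mul, _root_.map_inv, _root_.map_pow] at h
  exact mul_inv_eq_one.mp h

lemma k_rel2 : (PresentedGroup.of 0 : K) * PresentedGroup.of 1 * ((PresentedGroup.of 0) ^ 2)⁻¹
    = PresentedGroup.of 2 := by
  have h := mk_rel_one (rels := ({(of 0)⁻¹ * of 1 * (of 0) ^ 2 * (of 2)⁻¹,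
      of 0 * of 1 * ((of 0) ^ 2)⁻¹ * (of 2)⁻¹} : Set (FreeGroup (Fin 3))))
      (Set.mem_insert_of_mem _ rfl)
  simp only [_root_.map_mul, _root_.map_inv, _root_.map_pow] at h
  exact mul_inv_eq_one.mp h

lemma bs_key : (PresentedGroup.of 0 : BS 2 4) ^ 2 * PresentedGroup.of 1
    = PresentedGroup.of 1 * (PresentedGroup.of 0) ^ 4 := by
  rw [← bs_rel]; group

lemma k_key : (PresentedGroup.of 0 : K) ^ 2 * PresentedGroup.of 1
    = PresentedGroup.of 1 * (PresentedGroup.of 0) ^ 4 := by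
  have e : (PresentedGroup.of 0 : K)⁻¹ * PresentedGroup.of 1 * (PresentedGroup.of 0) ^ 2
      = PresentedGroup.of 0 * PresentedGroup.of 1 * ((PresentedGroup.of 0) ^ 2)⁻¹ :=
    k_rel1.trans k_rel2.symm
  calc (PresentedGroup.of 0 : K) ^ 2 * PresentedGroup.of 1
      = PresentedGroup.of 0 * (PresentedGroup.of 0 * PresentedGroup.of 1 *
          ((PresentedGroup.of 0) ^ 2)⁻¹) * (PresentedGroup.of 0) ^ 2 := by group; rw [zpow_two]
    _ = PresentedGroup.of 0 * ((PresentedGroup.of 0)⁻¹ * PresentedGroup.of 1 *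
          (PresentedGroup.of 0) ^ 2) * (PresentedGroup.of 0) ^ 2 := by rw [← e]
    _ = PresentedGroup.of 1 * (PresentedGroup.of 0) ^ 4 := by group

noncomputable def fKB : K →* BS 2 4 :=
  PresentedGroup.toGroup (f := ![(PresentedGroup.of 0 : BS 2 4), PresentedGroup.of 1,
      (PresentedGroup.of 0)⁻¹ * PresentedGroup.of 1 * (PresentedGroup.of 0) ^ 2]) <| by
  intro r hr
  rcases hr with h | h <;> subst h <;>
    simp only [_root_.map_mul, _root_.map_inv, _root_.map_pow, FreeGroup.lift_apply_of,
      Matrix.cons_val_zero, Matrix.cons_val_one, Matrix.head_cons, Matrix.cons_val_two,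
      Matrix.tail_cons]
  · group
  · have e : (PresentedGroup.of 0 : BS 2 4) * PresentedGroup.of 1 * ((PresentedGroup.of 0) ^ 2)⁻¹
        = (PresentedGroup.of 0)⁻¹ * PresentedGroup.of 1 * (PresentedGroup.of 0) ^ 2 := by
      calc (PresentedGroup.of 0 : BS 2 4) * PresentedGroup.of 1 * ((PresentedGroup.of 0) ^ 2)⁻¹
          = (PresentedGroup.of 0)⁻¹ * ((PresentedGroup.of 0) ^ 2 * PresentedGroup.of 1) *
            ((PresentedGroup.of 0) ^ 2)⁻¹ := by group
        _ = (PresentedGroup.of 0)⁻¹ * (PresentedGroup.of 1 * (PresentedGroup.of 0) ^ 4) *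
            ((PresentedGroup.of 0) ^ 2)⁻¹ := by rw [bs_key]
        _ = (PresentedGroup.of 0)⁻¹ * PresentedGroup.of 1 * (PresentedGroup.of 0) ^ 2 := by group
    rw [e]
    group

noncomputable def gBK : BS 2 4 →* K :=
  PresentedGroup.toGroup (f := ![(PresentedGroup.of 0 : K), PresentedGroup.of 1]) <| by
  intro r hr
  simp only [Set.mem_singleton_iff] at hr
  subst hr
  simp only [_root_.map_mul, _root_.map_inv, _root_.map_pow, FreeGroup.lift_apply_of,
    Matrix.cons_val_zero, Matrix.cons_val_one, Matrix.head_cons]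
  calc (PresentedGroup.of 1 : K)⁻¹ * (PresentedGroup.of 0) ^ 2 * PresentedGroup.of 1 *
        ((PresentedGroup.of 0) ^ 4)⁻¹
      = (PresentedGroup.of 1)⁻¹ * ((PresentedGroup.of 0) ^ 2 * PresentedGroup.of 1) *
        ((PresentedGroup.of 0) ^ 4)⁻¹ := by group
    _ = (PresentedGroup.of 1)⁻¹ * (PresentedGroup.of 1 * (PresentedGroup.of 0) ^ 4) *
        ((PresentedGroup.of 0) ^ 4)⁻¹ := by rw [k_key]
    _ = 1 := by group

/-- `⟨c, d, z ∣ c⁻¹dc² = z, cdc⁻² = z⟩ ≅ BS(2,4)`. -/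
theorem stmt0 : Nonempty (K ≃* BS 2 4) := by
  refine ⟨MonoidHom.toMulEquiv fKB gBK ?_ ?_⟩
  · apply PresentedGroup.ext
    intro x
    fin_cases x <;>
      simp only [Fin.mk_zero, Fin.mk_one, Fin.isValue, MonoidHom.comp_apply, MonoidHom.id_apply,
        fKB, gBK, PresentedGroup.toGroup.of,
        _root_.map_mul, _root_.map_inv, _root_.map_pow, Matrix.cons_val_zero, Matrix.cons_val_one,
        Matrix.head_cons, Matrix.cons_val_two, Matrix.tail_cons]
    exact k_rel1
  · apply PresentedGroup.ext
    intro x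
    fin_cases x <;>
      simp only [Fin.mk_zero, Fin.mk_one, Fin.isValue, MonoidHom.comp_apply, MonoidHom.id_apply,
        fKB, gBK, PresentedGroup.toGroup.of,
        Matrix.cons_val_zero, Matrix.cons_val_one, Matrix.head_cons]
end

section
/- The kernel of the homomorphism from BS(4,16) = ⟨a, b ∣ b⁻¹a⁴b = a¹⁶⟩ onto ℤ/4ℤ sending a ↦ 1, b ↦ 0 has the presentation ⟨q, b, b′, b″, b‴ ∣ b⁻¹qb = q⁴, b′⁻¹qb′ = q⁴, b″⁻¹qb″ = q⁴, b‴⁻¹qb‴ = q⁴⟩, where q = a⁴, b′ = a⁻¹ba, b″ = a⁻²ba², b‴ = a⁻³ba³. -/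
open FreeGroup

/-- `⟨q, b, b′, b″, b‴ ∣ b⁻¹qb = q⁴, b′⁻¹qb′ = q⁴, b″⁻¹qb″ = q⁴, b‴⁻¹qb‴ = q⁴⟩`
(generators: 0 = q, 1 = b, 2 = b′, 3 = b″, 4 = b‴). -/
abbrev H5 : Type :=
  PresentedGroup ({(of 1)⁻¹ * of 0 * of 1 * ((of 0) ^ 4)⁻¹,
                   (of 2)⁻¹ * of 0 * of 2 * ((of 0) ^ 4)⁻¹,
                   (of 3)⁻¹ * of 0 * of 3 * ((of 0) ^ 4)⁻¹,
                   (of 4)⁻¹ * of 0 * of 4 * ((of 0) ^ 4)⁻¹} : Set (FreeGroup (Fin 5)))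

/-- The images in `BS(4,16)` of the five generators:
`q = a⁴`, `b`, `b′ = a⁻¹ba`, `b″ = a⁻²ba²`, `b‴ = a⁻³ba³`. -/
def gensBS : Fin 5 → BS 4 16 :=
  ![(PresentedGroup.of 0) ^ 4, PresentedGroup.of 1,
    (PresentedGroup.of 0)⁻¹ * PresentedGroup.of 1 * PresentedGroup.of 0,
    ((PresentedGroup.of 0) ^ 2)⁻¹ * PresentedGroup.of 1 * (PresentedGroup.of 0) ^ 2,
    ((PresentedGroup.of 0) ^ 3)⁻¹ * PresentedGroup.of 1 * (PresentedGroup.of 0) ^ 3]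

namespace Stmt6Aux

lemma mk_rel {α : Type*} {rels : Set (FreeGroup α)} {r : FreeGroup α} (h : r ∈ rels) :
    PresentedGroup.mk rels r = 1 :=
  (QuotientGroup.eq_one_iff _).2 (Subgroup.subset_normalClosure h)

lemma h5conj (j : Fin 5)
    (hj : ((of j)⁻¹ * of 0 * of j * (((of 0 : FreeGroup (Fin 5))) ^ 4)⁻¹) ∈
      ({(of 1)⁻¹ * of 0 * of 1 * ((of 0) ^ 4)⁻¹,
        (of 2)⁻¹ * of 0 * of 2 * ((of 0) ^ 4)⁻¹,
        (of 3)⁻¹ * of 0 * of 3 * ((of 0) ^ 4)⁻¹,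
        (of 4)⁻¹ * of 0 * of 4 * ((of 0) ^ 4)⁻¹} : Set (FreeGroup (Fin 5)))) :
    (PresentedGroup.of j : H5)⁻¹ * PresentedGroup.of 0 * PresentedGroup.of j =
      (PresentedGroup.of 0) ^ 4 := by
  have := mk_rel hj
  simp only [MonoidHom.map_mul, MonoidHom.map_inv, MonoidHom.map_pow] at this
  have h2 := mul_eq_one_iff_eq_inv.mp this
  rw [inv_inv] at h2
  exact h2

lemma h5c1 : (PresentedGroup.of 1 : H5)⁻¹ * PresentedGroup.of 0 * PresentedGroup.of 1 =
    (PresentedGroup.of 0) ^ 4 := h5conj 1 (by left; rfl)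
lemma h5c2 : (PresentedGroup.of 2 : H5)⁻¹ * PresentedGroup.of 0 * PresentedGroup.of 2 =
    (PresentedGroup.of 0) ^ 4 := h5conj 2 (by right; left; rfl)
lemma h5c3 : (PresentedGroup.of 3 : H5)⁻¹ * PresentedGroup.of 0 * PresentedGroup.of 3 =
    (PresentedGroup.of 0) ^ 4 := h5conj 3 (by right; right; left; rfl)
lemma h5c4 : (PresentedGroup.of 4 : H5)⁻¹ * PresentedGroup.of 0 * PresentedGroup.of 4 =
    (PresentedGroup.of 0) ^ 4 := h5conj 4 (by right; right; right; rfl)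

lemma bsrel : (PresentedGroup.of 1 : BS 4 16)⁻¹ * (PresentedGroup.of 0) ^ 4 *
    PresentedGroup.of 1 = (PresentedGroup.of 0) ^ 16 := by
  have := mk_rel (rels := ({(of 1)⁻¹ * (of 0) ^ 4 * of 1 * ((of 0) ^ 16)⁻¹} :
    Set (FreeGroup (Fin 2)))) rfl
  simp only [MonoidHom.map_mul, MonoidHom.map_inv, MonoidHom.map_pow] at this
  have h2 := mul_eq_one_iff_eq_inv.mp this
  rw [inv_inv] at h2
  exact h2

lemma zmod4cases (i : ZMod 4) : i = 0 ∨ i = 1 ∨ i = 2 ∨ i = 3 := by revert i; decide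

/-! ### The Reidemeister–Schreier homomorphism into a wreath-like product -/

def shiftAut (σ : ZMod 4) : (ZMod 4 → H5) ≃* (ZMod 4 → H5) where
  toFun n i := n (i + σ)
  invFun n i := n (i - σ)
  left_inv n := funext fun i => by simp
  right_inv n := funext fun i => by simp
  map_mul' n m := rfl

def Wact : Multiplicative (ZMod 4) →* MulAut (ZMod 4 → H5) where
  toFun σ := shiftAut σ.toAdd
  map_one' := by ext n i; simp [shiftAut]
  map_mul' σ τ := by ext n i; simp [shiftAut, add_assoc]

abbrev W := SemidirectProduct (ZMod 4 → H5) (Multiplicative (ZMod 4)) Wact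

lemma Wact_apply (σ : Multiplicative (ZMod 4)) (n : ZMod 4 → H5) (i : ZMod 4) :
    Wact σ n i = n (i + σ.toAdd) := rfl

def q : H5 := PresentedGroup.of 0

def fa : ZMod 4 → H5 := fun i => if i = 3 then q else 1

def fb : ZMod 4 → H5 := fun i =>
  if i = 0 then PresentedGroup.of 1
  else q * PresentedGroup.of (if i = 1 then 4 else if i = 2 then 3 else 2) * q⁻¹

@[simp] lemma fa0 : fa 0 = 1 := if_neg (by decide)
@[simp] lemma fa1 : fa 1 = 1 := if_neg (by decide)
@[simp] lemma fa2 : fa 2 = 1 := if_neg (by decide)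
@[simp] lemma fa3 : fa 3 = q := if_pos rfl
@[simp] lemma fb0 : fb 0 = PresentedGroup.of 1 := if_pos rfl
@[simp] lemma fb1 : fb 1 = q * PresentedGroup.of 4 * q⁻¹ := by
  rw [fb, if_neg (by decide), if_pos rfl]
@[simp] lemma fb2 : fb 2 = q * PresentedGroup.of 3 * q⁻¹ := by
  rw [fb, if_neg (by decide), if_neg (by decide), if_pos rfl]
@[simp] lemma fb3 : fb 3 = q * PresentedGroup.of 2 * q⁻¹ := by
  rw [fb, if_neg (by decide), if_neg (by decide), if_neg (by decide)]

@[simp] lemma fa4 : fa 4 = 1 := by rw [show (4:ZMod 4) = 0 from by decide, fa0]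
@[simp] lemma fa5 : fa 5 = 1 := by rw [show (5:ZMod 4) = 1 from by decide, fa1]
@[simp] lemma fa6 : fa 6 = 1 := by rw [show (6:ZMod 4) = 2 from by decide, fa2]

def A : W := ⟨fa, Multiplicative.ofAdd 1⟩
def B : W := ⟨fb, 1⟩

lemma A4 : A ^ 4 = SemidirectProduct.inl (fun _ => q) := by
  have h4 : A ^ 4 = A * A * A * A := by norm_num [pow_succ, pow_zero, one_mul]
  rw [h4]
  ext i
  · simp only [SemidirectProduct.mul_left, SemidirectProduct.mul_right,
      SemidirectProduct.left_inl, A, Wact_apply, Pi.mul_apply]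
    rcases zmod4cases i with rfl | rfl | rfl | rfl <;> norm_num
  · simp only [SemidirectProduct.mul_right, SemidirectProduct.right_inl, A]
    decide


def FW : Fin 2 → W := ![A, B]

lemma conjB_inl (n : ZMod 4 → H5) (i : ZMod 4) :
    (B⁻¹ * SemidirectProduct.inl n * B).left i = (fb i)⁻¹ * n i * fb i := by
  simp [SemidirectProduct.mul_left, SemidirectProduct.inv_left, SemidirectProduct.mul_right,
    SemidirectProduct.inv_right, B, Wact_apply]

lemma FW_rel : ∀ r ∈ ({(of 1)⁻¹ * (of 0) ^ 4 * of 1 * ((of 0) ^ 16)⁻¹} :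
    Set (FreeGroup (Fin 2))), FreeGroup.lift FW r = 1 := by
  rintro r rfl
  simp only [MonoidHom.map_mul, MonoidHom.map_inv, MonoidHom.map_pow, FreeGroup.lift_apply_of]
  have e0 : FW 0 = A := rfl
  have e1 : FW 1 = B := rfl
  rw [e0, e1, mul_inv_eq_one, show (16:ℕ) = 4*4 from rfl, pow_mul, A4, ← map_pow]
  ext i
  · rw [conjB_inl]
    simp only [SemidirectProduct.left_inl, Pi.pow_apply]
    rcases zmod4cases i with rfl | rfl | rfl | rfl
    · rw [fb0]; exact h5c1
    · rw [fb1]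
      calc (q * PresentedGroup.of 4 * q⁻¹)⁻¹ * q * (q * PresentedGroup.of 4 * q⁻¹)
          = q * ((PresentedGroup.of 4)⁻¹ * PresentedGroup.of 0 * PresentedGroup.of 4) * q⁻¹ := by
            simp only [q]; group
        _ = q ^ 4 := by rw [h5c4]; simp only [q]; group
    · rw [fb2]
      calc (q * PresentedGroup.of 3 * q⁻¹)⁻¹ * q * (q * PresentedGroup.of 3 * q⁻¹)
          = q * ((PresentedGroup.of 3)⁻¹ * PresentedGroup.of 0 * PresentedGroup.of 3) * q⁻¹ := by
            simp only [q]; group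
        _ = q ^ 4 := by rw [h5c3]; simp only [q]; group
    · rw [fb3]
      calc (q * PresentedGroup.of 2 * q⁻¹)⁻¹ * q * (q * PresentedGroup.of 2 * q⁻¹)
          = q * ((PresentedGroup.of 2)⁻¹ * PresentedGroup.of 0 * PresentedGroup.of 2) * q⁻¹ := by
            simp only [q]; group
        _ = q ^ 4 := by rw [h5c2]; simp only [q]; group
  · simp only [SemidirectProduct.mul_right, SemidirectProduct.inv_right,
      SemidirectProduct.right_inl, B]
    decide

def ΦBS : BS 4 16 →* W := PresentedGroup.toGroup FW_rel

lemma ΦBS_of0 : ΦBS (PresentedGroup.of 0) = A := PresentedGroup.toGroup.of FW_rel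

lemma ΦBS_of1 : ΦBS (PresentedGroup.of 1) = B := PresentedGroup.toGroup.of FW_rel


/-! ### The homomorphism `H5 → BS 4 16` -/

lemma gens_rel : ∀ r ∈ ({(of 1)⁻¹ * of 0 * of 1 * ((of 0) ^ 4)⁻¹,
                   (of 2)⁻¹ * of 0 * of 2 * ((of 0) ^ 4)⁻¹,
                   (of 3)⁻¹ * of 0 * of 3 * ((of 0) ^ 4)⁻¹,
                   (of 4)⁻¹ * of 0 * of 4 * ((of 0) ^ 4)⁻¹} : Set (FreeGroup (Fin 5))),
    FreeGroup.lift gensBS r = 1 := by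
  have e0 : gensBS 0 = (PresentedGroup.of 0) ^ 4 := rfl
  have e1 : gensBS 1 = PresentedGroup.of 1 := rfl
  have e2 : gensBS 2 = (PresentedGroup.of 0)⁻¹ * PresentedGroup.of 1 * PresentedGroup.of 0 := rfl
  have e3 : gensBS 3 =
    ((PresentedGroup.of 0) ^ 2)⁻¹ * PresentedGroup.of 1 * (PresentedGroup.of 0) ^ 2 := rfl
  have e4 : gensBS 4 =
    ((PresentedGroup.of 0) ^ 3)⁻¹ * PresentedGroup.of 1 * (PresentedGroup.of 0) ^ 3 := rfl
  rintro r (rfl | rfl | rfl | rfl) <;>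
    simp only [MonoidHom.map_mul, MonoidHom.map_inv, MonoidHom.map_pow, FreeGroup.lift_apply_of,
      e0, e1, e2, e3, e4]
  · calc (PresentedGroup.of 1 : BS 4 16)⁻¹ * (PresentedGroup.of 0) ^ 4 * PresentedGroup.of 1 *
        (((PresentedGroup.of 0) ^ 4) ^ 4)⁻¹
        = (PresentedGroup.of 1)⁻¹ * (PresentedGroup.of 0) ^ 4 * PresentedGroup.of 1 *
          ((PresentedGroup.of 0) ^ 16)⁻¹ := by group
      _ = 1 := by rw [bsrel]; group
  · calc ((PresentedGroup.of 0 : BS 4 16)⁻¹ * PresentedGroup.of 1 * PresentedGroup.of 0)⁻¹ *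
        (PresentedGroup.of 0) ^ 4 *
        ((PresentedGroup.of 0)⁻¹ * PresentedGroup.of 1 * PresentedGroup.of 0) *
        (((PresentedGroup.of 0) ^ 4) ^ 4)⁻¹
        = (PresentedGroup.of 0)⁻¹ *
          ((PresentedGroup.of 1)⁻¹ * (PresentedGroup.of 0) ^ 4 * PresentedGroup.of 1) *
          PresentedGroup.of 0 * ((PresentedGroup.of 0) ^ 16)⁻¹ := by group
      _ = 1 := by rw [bsrel]; group
  · calc (((PresentedGroup.of 0 : BS 4 16) ^ 2)⁻¹ * PresentedGroup.of 1 *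
        (PresentedGroup.of 0) ^ 2)⁻¹ * (PresentedGroup.of 0) ^ 4 *
        (((PresentedGroup.of 0) ^ 2)⁻¹ * PresentedGroup.of 1 * (PresentedGroup.of 0) ^ 2) *
        (((PresentedGroup.of 0) ^ 4) ^ 4)⁻¹
        = ((PresentedGroup.of 0) ^ 2)⁻¹ *
          ((PresentedGroup.of 1)⁻¹ * (PresentedGroup.of 0) ^ 4 * PresentedGroup.of 1) *
          (PresentedGroup.of 0) ^ 2 * ((PresentedGroup.of 0) ^ 16)⁻¹ := by group
      _ = 1 := by rw [bsrel]; group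
  · calc (((PresentedGroup.of 0 : BS 4 16) ^ 3)⁻¹ * PresentedGroup.of 1 *
        (PresentedGroup.of 0) ^ 3)⁻¹ * (PresentedGroup.of 0) ^ 4 *
        (((PresentedGroup.of 0) ^ 3)⁻¹ * PresentedGroup.of 1 * (PresentedGroup.of 0) ^ 3) *
        (((PresentedGroup.of 0) ^ 4) ^ 4)⁻¹
        = ((PresentedGroup.of 0) ^ 3)⁻¹ *
          ((PresentedGroup.of 1)⁻¹ * (PresentedGroup.of 0) ^ 4 * PresentedGroup.of 1) *
          (PresentedGroup.of 0) ^ 3 * ((PresentedGroup.of 0) ^ 16)⁻¹ := by group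
      _ = 1 := by rw [bsrel]; group

def φH : H5 →* BS 4 16 := PresentedGroup.toGroup gens_rel

lemma φH_of (k : Fin 5) : φH (PresentedGroup.of k) = gensBS k :=
  PresentedGroup.toGroup.of gens_rel


@[simp] lemma fam1 : fa (-1) = q := by rw [show (-1 : ZMod 4) = 3 from by decide, fa3]
@[simp] lemma fam2 : fa (-2) = 1 := by rw [show (-2 : ZMod 4) = 2 from by decide, fa2]
@[simp] lemma fam3 : fa (-3) = 1 := by rw [show (-3 : ZMod 4) = 1 from by decide, fa1]
@[simp] lemma fbm1 : fb (-1) = q * PresentedGroup.of 2 * q⁻¹ := by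
  rw [show (-1 : ZMod 4) = 3 from by decide, fb3]
@[simp] lemma fbm2 : fb (-2) = q * PresentedGroup.of 3 * q⁻¹ := by
  rw [show (-2 : ZMod 4) = 2 from by decide, fb2]
@[simp] lemma fbm3 : fb (-3) = q * PresentedGroup.of 4 * q⁻¹ := by
  rw [show (-3 : ZMod 4) = 1 from by decide, fb1]

lemma conj1 : (A⁻¹ * B * A).left 0 = PresentedGroup.of 2 := by
  simp only [SemidirectProduct.mul_left, SemidirectProduct.inv_left, SemidirectProduct.mul_right,
    SemidirectProduct.inv_right, A, B, Wact_apply, Pi.mul_apply, Pi.inv_apply, toAdd_inv,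
    toAdd_ofAdd, toAdd_one, toAdd_mul]
  norm_num
  simp only [q]
  group

lemma conj2 : ((A * A)⁻¹ * B * (A * A)).left 0 = PresentedGroup.of 3 := by
  simp only [SemidirectProduct.mul_left, SemidirectProduct.inv_left, SemidirectProduct.mul_right,
    SemidirectProduct.inv_right, A, B, Wact_apply, Pi.mul_apply, Pi.inv_apply, toAdd_inv,
    toAdd_ofAdd, toAdd_one, toAdd_mul]
  norm_num
  simp only [q]
  group

lemma conj3 : ((A * A * A)⁻¹ * B * (A * A * A)).left 0 = PresentedGroup.of 4 := by
  simp only [SemidirectProduct.mul_left, SemidirectProduct.inv_left, SemidirectProduct.mul_right,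
    SemidirectProduct.inv_right, A, B, Wact_apply, Pi.mul_apply, Pi.inv_apply, toAdd_inv,
    toAdd_ofAdd, toAdd_one, toAdd_mul]
  norm_num
  simp only [q]
  group

section WithF

variable (f : BS 4 16 →* Multiplicative (ZMod 4))

lemma right_comp (ha : f (PresentedGroup.of 0) = Multiplicative.ofAdd 1)
    (hb : f (PresentedGroup.of 1) = 1) : SemidirectProduct.rightHom.comp ΦBS = f := by
  refine PresentedGroup.ext (Fin.forall_fin_two.mpr ⟨?_, ?_⟩)
  · show SemidirectProduct.rightHom (ΦBS (PresentedGroup.of 0)) = f (PresentedGroup.of 0)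
    rw [ΦBS_of0, ha]; rfl
  · show SemidirectProduct.rightHom (ΦBS (PresentedGroup.of 1)) = f (PresentedGroup.of 1)
    rw [ΦBS_of1, hb]; rfl

lemma right_eq (ha : f (PresentedGroup.of 0) = Multiplicative.ofAdd 1)
    (hb : f (PresentedGroup.of 1) = 1) (g : BS 4 16) : (ΦBS g).right = f g :=
  DFunLike.congr_fun (right_comp f ha hb) g

def ψK (ha : f (PresentedGroup.of 0) = Multiplicative.ofAdd 1)
    (hb : f (PresentedGroup.of 1) = 1) : f.ker →* H5 :=
  MonoidHom.mk' (fun g => (ΦBS (g : BS 4 16)).left 0) (by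
    intro x y
    have hx : (ΦBS (x : BS 4 16)).right = 1 :=
      (right_eq f ha hb _).trans (MonoidHom.mem_ker.mp x.2)
    calc (ΦBS ((x * y : f.ker) : BS 4 16)).left 0
        = (ΦBS (x : BS 4 16)).left 0 *
            Wact (ΦBS (x : BS 4 16)).right (ΦBS (y : BS 4 16)).left 0 := by
          rw [Subgroup.coe_mul, MonoidHom.map_mul]; rfl
      _ = (ΦBS (x : BS 4 16)).left 0 * (ΦBS (y : BS 4 16)).left 0 := by
          rw [hx, MonoidHom.map_one]; rfl)

lemma ψK_apply (ha : f (PresentedGroup.of 0) = Multiplicative.ofAdd 1)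
    (hb : f (PresentedGroup.of 1) = 1) (g : f.ker) : ψK f ha hb g = (ΦBS (g : BS 4 16)).left 0 := rfl

lemma φH_ker (ha : f (PresentedGroup.of 0) = Multiplicative.ofAdd 1)
    (hb : f (PresentedGroup.of 1) = 1) (x : H5) : φH x ∈ f.ker := by
  have hc : f.comp φH = (1 : H5 →* Multiplicative (ZMod 4)) := by
    apply PresentedGroup.ext
    intro k
    show f (φH (PresentedGroup.of k)) = 1
    rw [φH_of]
    fin_cases k
    · show f ((PresentedGroup.of 0) ^ 4) = 1
      rw [MonoidHom.map_pow, ha]; decide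
    · exact hb
    · show f ((PresentedGroup.of 0)⁻¹ * PresentedGroup.of 1 * PresentedGroup.of 0) = 1
      rw [MonoidHom.map_mul, MonoidHom.map_mul, MonoidHom.map_inv, ha, hb]; decide
    · show f (((PresentedGroup.of 0) ^ 2)⁻¹ * PresentedGroup.of 1 *
        (PresentedGroup.of 0) ^ 2) = 1
      rw [MonoidHom.map_mul, MonoidHom.map_mul, MonoidHom.map_inv, MonoidHom.map_pow, ha, hb]
      decide
    · show f (((PresentedGroup.of 0) ^ 3)⁻¹ * PresentedGroup.of 1 *
        (PresentedGroup.of 0) ^ 3) = 1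
      rw [MonoidHom.map_mul, MonoidHom.map_mul, MonoidHom.map_inv, MonoidHom.map_pow, ha, hb]
      decide
  exact MonoidHom.mem_ker.mpr (DFunLike.congr_fun hc x)


/-! ### Surjectivity: Schreier transversal argument -/

def TT : Subgroup (BS 4 16) := Subgroup.closure (Set.range gensBS)

def SS : Subgroup (BS 4 16) where
  carrier := {g | ∀ i : ZMod 4, (PresentedGroup.of 0) ^ (i.val) * g *
    ((PresentedGroup.of 0) ^ ((i + Multiplicative.toAdd (f g)).val))⁻¹ ∈ TT}
  one_mem' := by
    intro i
    have h1 : (i + Multiplicative.toAdd (f 1)) = i := by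
      rw [MonoidHom.map_one]; simp
    rw [h1]
    have h2 : (PresentedGroup.of 0 : BS 4 16) ^ (i.val) * 1 *
        ((PresentedGroup.of 0) ^ (i.val))⁻¹ = 1 := by group
    rw [h2]; exact one_mem _
  mul_mem' := by
    intro g h hg hh i
    have key : (i + Multiplicative.toAdd (f (g * h))) =
        ((i + Multiplicative.toAdd (f g)) + Multiplicative.toAdd (f h)) := by
      rw [MonoidHom.map_mul, toAdd_mul]; ring
    have eq1 : (PresentedGroup.of 0 : BS 4 16) ^ (i.val) * (g * h) *
        ((PresentedGroup.of 0) ^ ((i + Multiplicative.toAdd (f (g * h))).val))⁻¹ =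
        ((PresentedGroup.of 0) ^ (i.val) * g *
          ((PresentedGroup.of 0) ^ ((i + Multiplicative.toAdd (f g)).val))⁻¹) *
        ((PresentedGroup.of 0) ^ ((i + Multiplicative.toAdd (f g)).val) * h *
          ((PresentedGroup.of 0) ^
            (((i + Multiplicative.toAdd (f g)) + Multiplicative.toAdd (f h)).val))⁻¹) := by
      rw [key]; group
    rw [eq1]; exact mul_mem (hg i) (hh _)
  inv_mem' := by
    intro g hg i
    have key : ((i + Multiplicative.toAdd (f g⁻¹)) + Multiplicative.toAdd (f g)) = i := by
      rw [MonoidHom.map_inv, toAdd_inv]; ring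
    have eq1 : (PresentedGroup.of 0 : BS 4 16) ^ (i.val) * g⁻¹ *
        ((PresentedGroup.of 0) ^ ((i + Multiplicative.toAdd (f g⁻¹)).val))⁻¹ =
        ((PresentedGroup.of 0) ^ ((i + Multiplicative.toAdd (f g⁻¹)).val) * g *
          ((PresentedGroup.of 0) ^
            (((i + Multiplicative.toAdd (f g⁻¹)) + Multiplicative.toAdd (f g)).val))⁻¹)⁻¹ := by
      rw [key]; group
    rw [eq1]; exact inv_mem (hg _)

lemma genA_mem (ha : f (PresentedGroup.of 0) = Multiplicative.ofAdd 1) :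
    PresentedGroup.of 0 ∈ SS f := by
  intro i
  have hfa : Multiplicative.toAdd (f (PresentedGroup.of 0)) = 1 := by rw [ha]; rfl
  rw [hfa]
  rcases zmod4cases i with rfl | rfl | rfl | rfl
  · have : (PresentedGroup.of 0 : BS 4 16) ^ ((0 : ZMod 4).val) * PresentedGroup.of 0 *
        ((PresentedGroup.of 0) ^ (((0 : ZMod 4) + 1).val))⁻¹ = 1 := by
      simp only [show ((0:ZMod 4)+1).val = 1 from by decide, show ((1:ZMod 4)+1).val = 2 from by decide, show ((2:ZMod 4)+1).val = 3 from by decide, show ((3:ZMod 4)+1).val = 0 from by decide, show (0:ZMod 4).val = 0 from by decide, show (1:ZMod 4).val = 1 from by decide, show (2:ZMod 4).val = 2 from by decide, show (3:ZMod 4).val = 3 from by decide, pow_zero, pow_one]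
      group
    rw [this]; exact one_mem _
  · have : (PresentedGroup.of 0 : BS 4 16) ^ ((1 : ZMod 4).val) * PresentedGroup.of 0 *
        ((PresentedGroup.of 0) ^ (((1 : ZMod 4) + 1).val))⁻¹ = 1 := by
      simp only [show ((0:ZMod 4)+1).val = 1 from by decide, show ((1:ZMod 4)+1).val = 2 from by decide, show ((2:ZMod 4)+1).val = 3 from by decide, show ((3:ZMod 4)+1).val = 0 from by decide, show (0:ZMod 4).val = 0 from by decide, show (1:ZMod 4).val = 1 from by decide, show (2:ZMod 4).val = 2 from by decide, show (3:ZMod 4).val = 3 from by decide, pow_zero, pow_one]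
      group
    rw [this]; exact one_mem _
  · have : (PresentedGroup.of 0 : BS 4 16) ^ ((2 : ZMod 4).val) * PresentedGroup.of 0 *
        ((PresentedGroup.of 0) ^ (((2 : ZMod 4) + 1).val))⁻¹ = 1 := by
      simp only [show ((0:ZMod 4)+1).val = 1 from by decide, show ((1:ZMod 4)+1).val = 2 from by decide, show ((2:ZMod 4)+1).val = 3 from by decide, show ((3:ZMod 4)+1).val = 0 from by decide, show (0:ZMod 4).val = 0 from by decide, show (1:ZMod 4).val = 1 from by decide, show (2:ZMod 4).val = 2 from by decide, show (3:ZMod 4).val = 3 from by decide, pow_zero, pow_one]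
      group
    rw [this]; exact one_mem _
  · have : (PresentedGroup.of 0 : BS 4 16) ^ ((3 : ZMod 4).val) * PresentedGroup.of 0 *
        ((PresentedGroup.of 0) ^ (((3 : ZMod 4) + 1).val))⁻¹ = gensBS 0 := by
      show _ = (PresentedGroup.of 0 : BS 4 16) ^ 4
      simp only [show ((0:ZMod 4)+1).val = 1 from by decide, show ((1:ZMod 4)+1).val = 2 from by decide, show ((2:ZMod 4)+1).val = 3 from by decide, show ((3:ZMod 4)+1).val = 0 from by decide, show (0:ZMod 4).val = 0 from by decide, show (1:ZMod 4).val = 1 from by decide, show (2:ZMod 4).val = 2 from by decide, show (3:ZMod 4).val = 3 from by decide, pow_zero, pow_one]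
      group
    rw [this]; exact Subgroup.subset_closure (Set.mem_range_self 0)

lemma genB_mem (hb : f (PresentedGroup.of 1) = 1) :
    PresentedGroup.of 1 ∈ SS f := by
  intro i
  have hfb : Multiplicative.toAdd (f (PresentedGroup.of 1)) = 0 := by rw [hb]; rfl
  rw [hfb, add_zero]
  have m0 : gensBS 0 ∈ TT := Subgroup.subset_closure (Set.mem_range_self 0)
  have m1 : gensBS 1 ∈ TT := Subgroup.subset_closure (Set.mem_range_self 1)
  have m2 : gensBS 2 ∈ TT := Subgroup.subset_closure (Set.mem_range_self 2)
  have m3 : gensBS 3 ∈ TT := Subgroup.subset_closure (Set.mem_range_self 3)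
  have m4 : gensBS 4 ∈ TT := Subgroup.subset_closure (Set.mem_range_self 4)
  rcases zmod4cases i with rfl | rfl | rfl | rfl
  · have : (PresentedGroup.of 0 : BS 4 16) ^ ((0 : ZMod 4).val) * PresentedGroup.of 1 *
        ((PresentedGroup.of 0) ^ ((0 : ZMod 4).val))⁻¹ = gensBS 1 := by
      show _ = PresentedGroup.of 1
      simp only [show ((0:ZMod 4)+1).val = 1 from by decide, show ((1:ZMod 4)+1).val = 2 from by decide, show ((2:ZMod 4)+1).val = 3 from by decide, show ((3:ZMod 4)+1).val = 0 from by decide, show (0:ZMod 4).val = 0 from by decide, show (1:ZMod 4).val = 1 from by decide, show (2:ZMod 4).val = 2 from by decide, show (3:ZMod 4).val = 3 from by decide, pow_zero, pow_one]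
      group
    rw [this]; exact m1
  · have : (PresentedGroup.of 0 : BS 4 16) ^ ((1 : ZMod 4).val) * PresentedGroup.of 1 *
        ((PresentedGroup.of 0) ^ ((1 : ZMod 4).val))⁻¹ = gensBS 0 * gensBS 4 * (gensBS 0)⁻¹ := by
      show _ = (PresentedGroup.of 0) ^ 4 *
        (((PresentedGroup.of 0) ^ 3)⁻¹ * PresentedGroup.of 1 * (PresentedGroup.of 0) ^ 3) *
        ((PresentedGroup.of 0) ^ 4)⁻¹
      simp only [show ((0:ZMod 4)+1).val = 1 from by decide, show ((1:ZMod 4)+1).val = 2 from by decide, show ((2:ZMod 4)+1).val = 3 from by decide, show ((3:ZMod 4)+1).val = 0 from by decide, show (0:ZMod 4).val = 0 from by decide, show (1:ZMod 4).val = 1 from by decide, show (2:ZMod 4).val = 2 from by decide, show (3:ZMod 4).val = 3 from by decide, pow_zero, pow_one]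
      group
    rw [this]; exact mul_mem (mul_mem m0 m4) (inv_mem m0)
  · have : (PresentedGroup.of 0 : BS 4 16) ^ ((2 : ZMod 4).val) * PresentedGroup.of 1 *
        ((PresentedGroup.of 0) ^ ((2 : ZMod 4).val))⁻¹ = gensBS 0 * gensBS 3 * (gensBS 0)⁻¹ := by
      show _ = (PresentedGroup.of 0) ^ 4 *
        (((PresentedGroup.of 0) ^ 2)⁻¹ * PresentedGroup.of 1 * (PresentedGroup.of 0) ^ 2) *
        ((PresentedGroup.of 0) ^ 4)⁻¹
      simp only [show ((0:ZMod 4)+1).val = 1 from by decide, show ((1:ZMod 4)+1).val = 2 from by decide, show ((2:ZMod 4)+1).val = 3 from by decide, show ((3:ZMod 4)+1).val = 0 from by decide, show (0:ZMod 4).val = 0 from by decide, show (1:ZMod 4).val = 1 from by decide, show (2:ZMod 4).val = 2 from by decide, show (3:ZMod 4).val = 3 from by decide, pow_zero, pow_one]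
      group
    rw [this]; exact mul_mem (mul_mem m0 m3) (inv_mem m0)
  · have : (PresentedGroup.of 0 : BS 4 16) ^ ((3 : ZMod 4).val) * PresentedGroup.of 1 *
        ((PresentedGroup.of 0) ^ ((3 : ZMod 4).val))⁻¹ = gensBS 0 * gensBS 2 * (gensBS 0)⁻¹ := by
      show _ = (PresentedGroup.of 0) ^ 4 *
        ((PresentedGroup.of 0)⁻¹ * PresentedGroup.of 1 * PresentedGroup.of 0) *
        ((PresentedGroup.of 0) ^ 4)⁻¹
      simp only [show ((0:ZMod 4)+1).val = 1 from by decide, show ((1:ZMod 4)+1).val = 2 from by decide, show ((2:ZMod 4)+1).val = 3 from by decide, show ((3:ZMod 4)+1).val = 0 from by decide, show (0:ZMod 4).val = 0 from by decide, show (1:ZMod 4).val = 1 from by decide, show (2:ZMod 4).val = 2 from by decide, show (3:ZMod 4).val = 3 from by decide, pow_zero, pow_one]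
      group
    rw [this]; exact mul_mem (mul_mem m0 m2) (inv_mem m0)

lemma ker_le_TT (ha : f (PresentedGroup.of 0) = Multiplicative.ofAdd 1)
    (hb : f (PresentedGroup.of 1) = 1) (g : BS 4 16) (hg : f g = 1) : g ∈ TT := by
  have hS : g ∈ SS f := by
    refine PresentedGroup.generated_by _ (SS f) (fun j => ?_) g
    fin_cases j
    · exact genA_mem f ha
    · exact genB_mem f hb
  have h0 := hS 0
  have hz : ((0 : ZMod 4) + Multiplicative.toAdd (f g)) = 0 := by rw [hg]; rfl
  rw [hz] at h0
  have : (PresentedGroup.of 0 : BS 4 16) ^ ((0 : ZMod 4).val) * g *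
      ((PresentedGroup.of 0) ^ ((0 : ZMod 4).val))⁻¹ = g := by
    simp only [show ((0:ZMod 4)+1).val = 1 from by decide, show ((1:ZMod 4)+1).val = 2 from by decide, show ((2:ZMod 4)+1).val = 3 from by decide, show ((3:ZMod 4)+1).val = 0 from by decide, show (0:ZMod 4).val = 0 from by decide, show (1:ZMod 4).val = 1 from by decide, show (2:ZMod 4).val = 2 from by decide, show (3:ZMod 4).val = 3 from by decide, pow_zero, pow_one]
    group
  rwa [this] at h0

end WithF

end Stmt6Aux

/-- The kernel of `BS(4,16) → ℤ/4ℤ` (`a ↦ 1`, `b ↦ 0`) has presentation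
`⟨q, b, b′, b″, b‴ ∣ qᵇ = q^b′ = q^b″ = q^b‴ = q⁴⟩` with `q = a⁴`, `b′ = bᵃ`,
`b″ = b^(a²)`, `b‴ = b^(a³)`. -/
theorem stmt6 (f : BS 4 16 →* Multiplicative (ZMod 4))
    (ha : f (PresentedGroup.of 0) = Multiplicative.ofAdd 1)
    (hb : f (PresentedGroup.of 1) = 1) :
    ∃ e : H5 ≃* f.ker, ∀ i : Fin 5, (e (PresentedGroup.of i) : BS 4 16) = gensBS i := by
  have hker := Stmt6Aux.φH_ker f ha hb
  let φ'' : H5 →* f.ker := Stmt6Aux.φH.codRestrict f.ker hker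
  have hcoe : ∀ x : H5, (φ'' x : BS 4 16) = Stmt6Aux.φH x := fun x => rfl
  have hA2 : Stmt6Aux.A ^ 2 = Stmt6Aux.A * Stmt6Aux.A := sq Stmt6Aux.A
  have hA3 : Stmt6Aux.A ^ 3 = Stmt6Aux.A * Stmt6Aux.A * Stmt6Aux.A := by
    norm_num [pow_succ, pow_zero, one_mul]
  have hcompose : (Stmt6Aux.ψK f ha hb).comp φ'' = MonoidHom.id H5 := by
    apply PresentedGroup.ext
    intro k
    show (Stmt6Aux.ΦBS ((φ'' (PresentedGroup.of k)) : BS 4 16)).left 0 = PresentedGroup.of k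
    rw [hcoe, Stmt6Aux.φH_of]
    fin_cases k
    · show (Stmt6Aux.ΦBS ((PresentedGroup.of 0) ^ 4)).left 0 = PresentedGroup.of 0
      rw [MonoidHom.map_pow, Stmt6Aux.ΦBS_of0, Stmt6Aux.A4]
      rfl
    · show (Stmt6Aux.ΦBS (PresentedGroup.of 1)).left 0 = PresentedGroup.of 1
      rw [Stmt6Aux.ΦBS_of1]
      exact Stmt6Aux.fb0
    · show (Stmt6Aux.ΦBS ((PresentedGroup.of 0)⁻¹ * PresentedGroup.of 1 *
        PresentedGroup.of 0)).left 0 = PresentedGroup.of 2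
      rw [MonoidHom.map_mul, MonoidHom.map_mul, MonoidHom.map_inv, Stmt6Aux.ΦBS_of0,
        Stmt6Aux.ΦBS_of1]
      exact Stmt6Aux.conj1
    · show (Stmt6Aux.ΦBS (((PresentedGroup.of 0) ^ 2)⁻¹ * PresentedGroup.of 1 *
        (PresentedGroup.of 0) ^ 2)).left 0 = PresentedGroup.of 3
      rw [MonoidHom.map_mul, MonoidHom.map_mul, MonoidHom.map_inv, MonoidHom.map_pow,
        Stmt6Aux.ΦBS_of0, Stmt6Aux.ΦBS_of1, hA2]
      exact Stmt6Aux.conj2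
    · show (Stmt6Aux.ΦBS (((PresentedGroup.of 0) ^ 3)⁻¹ * PresentedGroup.of 1 *
        (PresentedGroup.of 0) ^ 3)).left 0 = PresentedGroup.of 4
      rw [MonoidHom.map_mul, MonoidHom.map_mul, MonoidHom.map_inv, MonoidHom.map_pow,
        Stmt6Aux.ΦBS_of0, Stmt6Aux.ΦBS_of1, hA3]
      exact Stmt6Aux.conj3
  have hinj : Function.Injective φ'' := by
    intro x y hxy
    have hx := DFunLike.congr_fun hcompose x
    have hy := DFunLike.congr_fun hcompose y
    simp only [MonoidHom.comp_apply, MonoidHom.id_apply] at hx hy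
    rw [← hx, ← hy, hxy]
  have hsurj : Function.Surjective φ'' := by
    intro y
    have hyT : (y : BS 4 16) ∈ Stmt6Aux.TT :=
      Stmt6Aux.ker_le_TT f ha hb y (MonoidHom.mem_ker.mp y.2)
    have hrange : Stmt6Aux.TT ≤ Stmt6Aux.φH.range := by
      rw [Stmt6Aux.TT]
      refine (Subgroup.closure_le _).mpr ?_
      rintro _ ⟨k, rfl⟩
      exact ⟨PresentedGroup.of k, Stmt6Aux.φH_of k⟩
    obtain ⟨x, hx⟩ := hrange hyT
    exact ⟨x, Subtype.ext (by rw [hcoe, hx])⟩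
  refine ⟨MulEquiv.ofBijective φ'' ⟨hinj, hsurj⟩, fun i => ?_⟩
  show ((φ'' (PresentedGroup.of i) : f.ker) : BS 4 16) = gensBS i
  rw [hcoe, Stmt6Aux.φH_of]
end
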